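/- arXiv:0704.3213 — 4 statements merged into one kernel-verified Lean document; each statement's English description precedes it below -/
import Mathlib

section
/- Let X be a nonempty, compact, connected metric space equipped with a total order ≺ whose order topology agrees with the metric topology of X. Then either X is a single point, or there exists an order-preserving homeomorphism from X onto the unit interval [0,1]. -/
open Set

section Aux

variable {X : Type*} [MetricSpace X] [CompactSpace X] [ConnectedSpace X] [Nonempty X]
  [LinearOrder X] [OrderTopology X]

theorem arc_denselyOrdered : DenselyOrdered X := by
  constructor
  intro a b hab
  by_contra h
  push_neg at h
  have hcover : (univ : Set X) ⊆ Iio b ∪ Ioi a := by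
    intro z _
    rcases lt_or_ge z b with hz | hz
    · exact Or.inl hz
    · exact Or.inr (lt_of_lt_of_le hab hz)
  have := isPreconnected_univ (α := X) (Iio b) (Ioi a) isOpen_Iio isOpen_Ioi hcover
    ⟨a, trivial, hab⟩ ⟨b, trivial, hab⟩
  obtain ⟨z, -, hz1, hz2⟩ := this
  exact absurd hz1 (not_lt.2 (h z hz2))

/-- Existence of least upper bounds from compactness. -/
theorem arc_exists_isLUB (T : Set X) (hne : T.Nonempty) : ∃ x : X, IsLUB T x := by
  obtain ⟨x, hx⟩ := (isClosed_closure.isCompact (s := closure T)).exists_isGreatest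
    (hne.mono subset_closure)
  refine ⟨x, ?_, ?_⟩
  · rw [← upperBounds_closure]; exact hx.2
  · intro y hy
    rw [← upperBounds_closure (s := T)] at hy
    exact hy hx.1

end Aux

/-- Order characterization of an arc: a nonempty, compact, connected metric
space whose topology agrees with the order topology of a total order is either
a single point or order-homeomorphic to `[0,1]`. -/
theorem order_characterization_of_arc
    (X : Type*) [MetricSpace X] [CompactSpace X] [ConnectedSpace X] [Nonempty X]
    [LinearOrder X] [OrderTopology X] :
    (∃ x : X, ∀ y : X, y = x) ∨
      ∃ f : X ≃ₜ Set.Icc (0:ℝ) 1, StrictMono f := by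
  haveI : DenselyOrdered X := arc_denselyOrdered
  by_cases htriv : ∀ x y : X, x = y
  · left
    exact ⟨Classical.arbitrary X, fun y => htriv y _⟩
  · right
    push_neg at htriv
    obtain ⟨a, b, hab⟩ := htriv
    -- bottom and top elements
    obtain ⟨bot, hbot⟩ := isCompact_univ.exists_isLeast (univ_nonempty (α := X))
    obtain ⟨top, htop⟩ := isCompact_univ.exists_isGreatest (univ_nonempty (α := X))
    have hbot' : ∀ z : X, bot ≤ z := fun z => hbot.2 trivial
    have htop' : ∀ z : X, z ≤ top := fun z => htop.2 trivial
    have hbt : bot < top := by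
      rcases lt_or_gt_of_ne hab with h | h
      · exact lt_of_le_of_lt (hbot' a) (lt_of_lt_of_le h (htop' b))
      · exact lt_of_le_of_lt (hbot' b) (lt_of_lt_of_le h (htop' a))
    -- countable dense subset avoiding endpoints
    obtain ⟨s, hsc, hsd⟩ := TopologicalSpace.exists_countable_dense X
    set D : Set X := s ∩ Ioo bot top with hD
    have hbetween : ∀ x y : X, x < y → ∃ d ∈ D, x < d ∧ d < y := by
      intro x y hxy
      obtain ⟨d, hds, hd1, hd2⟩ := hsd.exists_between hxy
      exact ⟨d, ⟨hds, lt_of_le_of_lt (hbot' x) hd1, lt_of_lt_of_le hd2 (htop' y)⟩, hd1, hd2⟩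
    -- instances on the subtype D
    haveI : Countable D := ((hsc.mono (inter_subset_left)).to_subtype)
    haveI hDne : Nonempty D := by
      obtain ⟨d, hd, -, -⟩ := hbetween bot top hbt
      exact ⟨⟨d, hd⟩⟩
    haveI : DenselyOrdered D := by
      constructor
      rintro ⟨d₁, hd₁⟩ ⟨d₂, hd₂⟩ h
      obtain ⟨d, hd, h1, h2⟩ := hbetween d₁ d₂ h
      exact ⟨⟨d, hd⟩, h1, h2⟩
    haveI : NoMinOrder D := by
      constructor
      rintro ⟨d, hd⟩
      obtain ⟨d', hd', h1, h2⟩ := hbetween bot d hd.2.1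
      exact ⟨⟨d', hd'⟩, h2⟩
    haveI : NoMaxOrder D := by
      constructor
      rintro ⟨d, hd⟩
      obtain ⟨d', hd', h1, h2⟩ := hbetween d top hd.2.2
      exact ⟨⟨d', hd'⟩, h1⟩
    haveI : Nonempty (Ioo (0:ℚ) 1) := Set.nonempty_Ioo_subtype (by norm_num)
    -- Cantor's back-and-forth isomorphism
    obtain ⟨g⟩ := Order.iso_of_countable_dense D (Ioo (0:ℚ) 1)
    -- value of g as a real number
    set v : D → ℝ := fun d => ((g d : ℚ) : ℝ) with hv
    have hv0 : ∀ d : D, 0 < v d := fun d => by simp only [hv]; exact_mod_cast (g d).2.1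
    have hv1 : ∀ d : D, v d < 1 := fun d => by simp only [hv]; exact_mod_cast (g d).2.2
    have hvmono : ∀ {d₁ d₂ : D}, d₁ < d₂ → v d₁ < v d₂ := by
      intro d₁ d₂ h
      simp only [hv]
      exact_mod_cast (Subtype.coe_lt_coe.2 (g.lt_iff_lt.2 h))
    have hvlt : ∀ {d₁ d₂ : D}, v d₁ < v d₂ → d₁ < d₂ := by
      intro d₁ d₂ h
      simp only [hv] at h
      have : (g d₁ : ℚ) < (g d₂ : ℚ) := by exact_mod_cast h
      exact g.lt_iff_lt.1 (Subtype.coe_lt_coe.1 this)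
    -- the map
    set S : X → Set ℝ := fun x => insert 0 (v '' {d : D | (d : X) < x}) with hS
    have hSne : ∀ x, (S x).Nonempty := fun x => ⟨0, mem_insert _ _⟩
    have hSbdd : ∀ x, BddAbove (S x) := by
      intro x
      refine ⟨1, ?_⟩
      rintro r (rfl | ⟨d, -, rfl⟩)
      · norm_num
      · exact (hv1 d).le
    set φ : X → ℝ := fun x => sSup (S x) with hφ
    have hφ0 : ∀ x, 0 ≤ φ x := fun x => le_csSup (hSbdd x) (mem_insert _ _)
    have hφ1 : ∀ x, φ x ≤ 1 := by
      intro x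
      apply csSup_le (hSne x)
      rintro r (rfl | ⟨d, -, rfl⟩)
      · norm_num
      · exact (hv1 d).le
    have hφle : ∀ {x : X} {d : D}, (d : X) < x → v d ≤ φ x :=
      fun {x d} h => le_csSup (hSbdd x) (mem_insert_of_mem _ ⟨d, h, rfl⟩)
    have hφge : ∀ {x : X} {r : ℝ}, 0 ≤ r → (∀ d : D, (d : X) < x → v d ≤ r) → φ x ≤ r := by
      intro x r h0 hr
      apply csSup_le (hSne x)
      rintro q (rfl | ⟨d, hd, rfl⟩)
      · exact h0
      · exact hr d hd
    -- strict monotonicity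
    have hmono : StrictMono φ := by
      intro x y hxy
      obtain ⟨d₁, hd₁, h1, h2⟩ := hbetween x y hxy
      obtain ⟨d₂, hd₂, h3, h4⟩ := hbetween d₁ y h2
      have hx : φ x ≤ v ⟨d₁, hd₁⟩ := by
        apply hφge (hv0 _).le
        intro d hd
        exact (hvmono (show d < ⟨d₁, hd₁⟩ from hd.trans h1)).le
      calc φ x ≤ v ⟨d₁, hd₁⟩ := hx
        _ < v ⟨d₂, hd₂⟩ := hvmono h3
        _ ≤ φ y := hφle h4
    -- surjectivity onto [0,1]
    have hsurj : ∀ r : ℝ, 0 ≤ r → r ≤ 1 → ∃ x : X, φ x = r := by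
      intro r hr0 hr1
      rcases eq_or_lt_of_le hr0 with rfl | hr0
      · refine ⟨bot, ?_⟩
        apply le_antisymm _ (hφ0 bot)
        apply hφge le_rfl
        intro d hd
        exact absurd hd (not_lt.2 (hbot' _))
      · -- 0 < r ≤ 1
        -- key: rationals below r give elements of D
        have hmkD : ∀ q : ℚ, 0 < q → (q : ℝ) < r → ∃ d : D, (g d : ℚ) = q := by
          intro q hq0 hqr
          have hq1 : q < 1 := by
            have : (q : ℝ) < 1 := lt_of_lt_of_le hqr hr1
            exact_mod_cast this
          exact ⟨g.symm ⟨q, hq0, hq1⟩, by simp⟩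
        set T : Set X := {z : X | ∃ hz : z ∈ D, v ⟨z, hz⟩ < r} with hT
        have hTne : T.Nonempty := by
          obtain ⟨q, hq1, hq2⟩ := exists_rat_btwn hr0
          have hq0 : 0 < q := by exact_mod_cast hq1
          obtain ⟨d, hd⟩ := hmkD q hq0 hq2
          exact ⟨d, d.2, by rw [hv]; simp only; rw [hd]; exact hq2⟩
        obtain ⟨x, hx⟩ := arc_exists_isLUB T hTne
        refine ⟨x, le_antisymm ?_ ?_⟩
        · -- φ x ≤ r
          apply hφge hr0.le
          intro d hd
          by_contra hcon
          push_neg at hcon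
          have hub : d.1 ∈ upperBounds T := by
            rintro z ⟨hz, hzr⟩
            exact (hvlt (hzr.trans hcon)).le
          exact absurd (hx.2 hub) (not_le.2 hd)
        · -- r ≤ φ x
          by_contra hcon
          push_neg at hcon
          obtain ⟨q, hq1, hq2⟩ := exists_rat_btwn hcon
          have hq0 : 0 < q := by exact_mod_cast lt_of_le_of_lt (hφ0 x) hq1
          obtain ⟨d, hd⟩ := hmkD q hq0 hq2
          obtain ⟨q', hq1', hq2'⟩ := exists_rat_btwn hq2
          have hq0' : 0 < q' := lt_trans hq0 (by exact_mod_cast hq1')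
          obtain ⟨d', hd'⟩ := hmkD q' hq0' hq2'
          have hdT : (d : X) ∈ T := ⟨d.2, by rw [hv]; simp only [Subtype.coe_eta]; rw [hd]; exact hq2⟩
          have hdT' : (d' : X) ∈ T := ⟨d'.2, by rw [hv]; simp only [Subtype.coe_eta]; rw [hd']; exact hq2'⟩
          have hdd' : d < d' := by
            apply hvlt
            rw [hv]; simp only; rw [hd, hd']
            exact_mod_cast hq1'
          have hdx : (d : X) < x := lt_of_lt_of_le hdd' (hx.1 hdT')
          have : v d ≤ φ x := hφle hdx
          rw [hv] at this; simp only at this; rw [hd] at this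
          exact absurd (lt_of_le_of_lt this hq1) (lt_irrefl _)
    -- assemble the homeomorphism
    set F : X → Icc (0:ℝ) 1 := fun x => ⟨φ x, hφ0 x, hφ1 x⟩ with hF
    have hFmono : StrictMono F := fun x y h => Subtype.coe_lt_coe.1 (hmono h)
    have hFsurj : Function.Surjective F := by
      rintro ⟨r, hr0, hr1⟩
      obtain ⟨x, hx⟩ := hsurj r hr0 hr1
      exact ⟨x, Subtype.ext hx⟩
    let e : X ≃o Icc (0:ℝ) 1 := StrictMono.orderIsoOfSurjective F hFmono hFsurj
    refine ⟨e.toHomeomorph, ?_⟩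
    have : ⇑e.toHomeomorph = F := by
      rw [OrderIso.coe_toHomeomorph]
      exact StrictMono.coe_orderIsoOfSurjective F hFmono hFsurj
    rw [this]
    exact hFmono
end

section
/- Let X be a nonempty compact connected metric space and E ⊊ X a nonempty subset. If C is a connected component of E, then the boundary of C (relative to X) intersects the boundary of E (relative to X): ∂C ∩ ∂E ≠ ∅. -/
/-- Šura-Bura: in a compact Hausdorff space, any open set containing the connected
component of `x` contains a clopen neighborhood of `x`. -/
lemma exists_isClopen_of_connectedComponent_subset
    {Y : Type*} [TopologicalSpace Y] [CompactSpace Y] [T2Space Y]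
    (x : Y) {O : Set Y} (hO : IsOpen O) (hcc : connectedComponent x ⊆ O) :
    ∃ W : Set Y, IsClopen W ∧ x ∈ W ∧ W ⊆ O := by
  rw [connectedComponent_eq_iInter_isClopen] at hcc
  have hempty : Oᶜ ∩ ⋂ s : { s : Set Y // IsClopen s ∧ x ∈ s }, (s : Set Y) = ∅ := by
    rw [Set.eq_empty_iff_forall_notMem]
    rintro y ⟨hyO, hy⟩
    exact hyO (hcc hy)
  obtain ⟨t, ht⟩ := hO.isClosed_compl.isCompact.elim_finite_subfamily_closed
    (fun s : { s : Set Y // IsClopen s ∧ x ∈ s } => (s : Set Y))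
    (fun s => s.2.1.1) hempty
  refine ⟨⋂ i ∈ t, (i : Set Y), isClopen_biInter_finset fun i _ => i.2.1,
    Set.mem_iInter₂.mpr fun i _ => i.2.2, ?_⟩
  intro y hy
  by_contra hyO
  exact (Set.eq_empty_iff_forall_notMem.mp ht y) ⟨hyO, hy⟩

/-- Boundary Bumping Theorem: if `X` is a nonempty compact connected metric
space, `E ⊊ X` is nonempty, and `C` is a connected component of `E`, then
`∂C ∩ ∂E ≠ ∅` (boundaries relative to `X`). -/
theorem boundary_bumping
    (X : Type*) [MetricSpace X] [CompactSpace X] [ConnectedSpace X] [Nonempty X]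
    (E : Set X) (hEne : E.Nonempty) (hEproper : E ≠ Set.univ) :
    ∀ x ∈ E, (frontier (connectedComponentIn E x) ∩ frontier E).Nonempty := by
  intro x hx
  by_contra hcon
  rw [Set.not_nonempty_iff_eq_empty] at hcon
  set C := connectedComponentIn E x with hC
  have hCE : C ⊆ E := connectedComponentIn_subset E x
  have hxC : x ∈ C := mem_connectedComponentIn hx
  -- closure C is disjoint from closure Eᶜ, hence contained in interior E
  have hdisj : closure C ∩ closure Eᶜ = ∅ := by
    rw [Set.eq_empty_iff_forall_notMem]
    rintro y ⟨hy1, hy2⟩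
    have hyC : y ∈ frontier C := by
      rw [frontier_eq_closure_inter_closure]
      exact ⟨hy1, closure_mono (Set.compl_subset_compl.mpr hCE) hy2⟩
    have hyE : y ∈ frontier E := by
      rw [frontier_eq_closure_inter_closure]
      exact ⟨closure_mono hCE hy1, hy2⟩
    exact (Set.eq_empty_iff_forall_notMem.mp hcon y) ⟨hyC, hyE⟩
  have hclC : closure C ⊆ interior E := by
    intro y hy
    rw [← compl_compl (interior E), Set.mem_compl_iff, ← closure_compl]
    intro hy2
    exact (Set.eq_empty_iff_forall_notMem.mp hdisj y) ⟨hy, hy2⟩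
  -- squeeze a compact subspace around closure C inside interior E
  obtain ⟨V, hVopen, hCV, hVE⟩ :=
    normal_exists_closure_subset isClosed_closure isOpen_interior hclC
  have hYE : closure V ⊆ E := hVE.trans interior_subset
  have hxV : x ∈ V := hCV (subset_closure hxC)
  -- work in the compact Hausdorff subspace Y = closure V
  haveI : CompactSpace (closure V) :=
    isCompact_iff_compactSpace.mp isClosed_closure.isCompact
  set x' : closure V := ⟨x, subset_closure hxV⟩ with hx'
  -- the connected component of x' in Y maps into C, hence into V
  have hcomp : connectedComponent x' ⊆ Subtype.val ⁻¹' V := by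
    intro y hy
    have h1 : (y : X) ∈ connectedComponentIn (closure V) x := by
      rw [connectedComponentIn_eq_image (subset_closure hxV)]
      exact ⟨y, hy, rfl⟩
    have h2 : connectedComponentIn (closure V) x ⊆ C :=
      connectedComponentIn_mono x hYE
    exact hCV (subset_closure (h2 h1))
  obtain ⟨W', hW'clopen, hxW', hW'V⟩ :=
    exists_isClopen_of_connectedComponent_subset x'
      (hVopen.preimage continuous_subtype_val) hcomp
  -- push W' forward to a clopen subset of X
  set W : Set X := Subtype.val '' W' with hW
  have hWV : W ⊆ V := by rintro y ⟨z, hz, rfl⟩; exact hW'V hz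
  have hWclosed : IsClosed W := by
    have : IsCompact W := (hW'clopen.1.isCompact).image continuous_subtype_val
    exact this.isClosed
  have hWopen : IsOpen W := by
    obtain ⟨O, hOopen, hOW⟩ := isOpen_induced_iff.mp hW'clopen.2
    have : W = O ∩ V := by
      apply Set.Subset.antisymm
      · rintro y ⟨z, hz, rfl⟩
        exact ⟨by have := hOW ▸ hz; exact this, hW'V hz⟩
      · rintro y ⟨hyO, hyV⟩
        exact ⟨⟨y, subset_closure hyV⟩, by rw [← hOW] at *; exact hyO, rfl⟩
    rw [this]
    exact hOopen.inter hVopen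
  -- a nonempty clopen proper subset contradicts connectedness of X
  have hWuniv : W = Set.univ :=
    (IsClopen.eq_univ ⟨hWclosed, hWopen⟩ ⟨x, ⟨x', hxW', rfl⟩⟩)
  apply hEproper
  apply Set.eq_univ_of_univ_subset
  rw [← hWuniv]
  exact hWV.trans ((subset_closure).trans hYE)
end

section
/- Let X be a compact connected subset of the Riemann sphere ℂ ∪ {∞} containing ∞, and set E = X ∩ ℂ. Then every connected component of E is unbounded in ℂ. -/
open OnePoint Set Metric

/-- In a compact Hausdorff space, any open set containing a connected component
contains a clopen set containing that component. -/
lemma exists_isClopen_superset_connectedComponent {α : Type*} [TopologicalSpace α]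
    [CompactSpace α] [T2Space α] (x : α) {U : Set α} (hU : IsOpen U)
    (h : connectedComponent x ⊆ U) :
    ∃ V : Set α, IsClopen V ∧ connectedComponent x ⊆ V ∧ V ⊆ U := by
  let N := { s : Set α // IsClopen s ∧ x ∈ s }
  haveI : Nonempty N := ⟨⟨univ, isClopen_univ, mem_univ x⟩⟩
  have hNcl : ∀ s : N, IsClosed s.val := fun s => s.property.1.1
  have hdir : Directed (fun a b : Set α => b ⊆ a) fun s : N => s.val := by
    rintro ⟨s, hs, hxs⟩ ⟨t, ht, hxt⟩
    exact ⟨⟨s ∩ t, hs.inter ht, ⟨hxs, hxt⟩⟩, inter_subset_left, inter_subset_right⟩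
  have h_nhd : ∀ y ∈ ⋂ s : N, s.val, U ∈ nhds y := by
    intro y hy
    rw [← connectedComponent_eq_iInter_isClopen] at hy
    exact hU.mem_nhds (h hy)
  obtain ⟨⟨s, hs, hxs⟩, hsU⟩ := exists_subset_nhds_of_compactSpace hdir hNcl h_nhd
  exact ⟨s, hs, hs.connectedComponent_subset hxs, hsU⟩

/-- If `X` is a compact connected subset of the Riemann sphere `ℂ ∪ {∞}`
containing `∞`, then every connected component of `E = X ∩ ℂ` is unbounded. -/
theorem components_of_sphere_continuum_unbounded
    (X : Set (OnePoint ℂ)) (hXc : IsCompact X) (hXconn : IsConnected X)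
    (hinf : (∞ : OnePoint ℂ) ∈ X) :
    ∀ z : ℂ, (z : OnePoint ℂ) ∈ X →
      ¬ Bornology.IsBounded
        (connectedComponentIn {w : ℂ | (w : OnePoint ℂ) ∈ X} z) := by
  intro z hz hbd
  set E : Set ℂ := {w : ℂ | (w : OnePoint ℂ) ∈ X} with hE
  have hzE : z ∈ E := hz
  set C : Set ℂ := connectedComponentIn E z with hC
  have hEclosed : IsClosed E := hXc.isClosed.preimage OnePoint.continuous_coe
  obtain ⟨R, hR⟩ := hbd.subset_closedBall (0 : ℂ)
  have hCball : C ⊆ ball (0 : ℂ) (R + 1) :=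
    hR.trans (closedBall_subset_ball (by linarith))
  set Y : Set ℂ := E ∩ closedBall (0 : ℂ) (R + 1) with hY
  have hYcomp : IsCompact Y :=
    (isCompact_closedBall _ _).of_isClosed_subset
      (hEclosed.inter isClosed_closedBall) inter_subset_right
  have hzY : z ∈ Y := ⟨hzE, ball_subset_closedBall (hCball (mem_connectedComponentIn hzE))⟩
  have hCY : connectedComponentIn Y z = C := by
    apply Subset.antisymm (connectedComponentIn_mono z inter_subset_left)
    exact isPreconnected_connectedComponentIn.subset_connectedComponentIn
      (mem_connectedComponentIn hzE)
      (subset_inter (connectedComponentIn_subset E z) (hCball.trans ball_subset_closedBall))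
  haveI : CompactSpace Y := isCompact_iff_compactSpace.mp hYcomp
  set z' : Y := ⟨z, hzY⟩ with hz'
  have himg : (Subtype.val '' connectedComponent z' : Set ℂ) = C := by
    rw [← connectedComponentIn_eq_image hzY, hCY]
  -- the open set in Y avoiding the boundary sphere
  set U : Set Y := Subtype.val ⁻¹' ball (0 : ℂ) (R + 1) with hU
  have hUopen : IsOpen U := (isOpen_ball).preimage continuous_subtype_val
  have hcompU : connectedComponent z' ⊆ U := by
    intro y hy
    exact hCball (himg ▸ mem_image_of_mem _ hy)
  obtain ⟨V, hVclopen, hcompV, hVU⟩ :=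
    exists_isClopen_superset_connectedComponent z' hUopen hcompU
  set K : Set ℂ := Subtype.val '' V with hK
  have hzK : z ∈ K := ⟨z', hcompV (mem_connectedComponent), rfl⟩
  have hKcomp : IsCompact K := (hVclopen.1.isCompact).image continuous_subtype_val
  have hKball : K ⊆ ball (0 : ℂ) (R + 1) := by
    rintro w ⟨y, hy, rfl⟩; exact hVU hy
  have hKE : K ⊆ E := by rintro w ⟨y, hy, rfl⟩; exact y.2.1
  -- K is relatively open in E: K = W' ∩ E with W' open
  obtain ⟨W, hWopen, hWV⟩ := isOpen_induced_iff.mp hVclopen.2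
  have hKeq : K = (W ∩ ball (0 : ℂ) (R + 1)) ∩ E := by
    apply Subset.antisymm
    · rintro w ⟨y, hy, rfl⟩
      refine ⟨⟨?_, hVU hy⟩, y.2.1⟩
      have := hWV ▸ hy; exact this
    · rintro w ⟨⟨hwW, hwball⟩, hwE⟩
      have hwY : w ∈ Y := ⟨hwE, ball_subset_closedBall hwball⟩
      refine ⟨⟨w, hwY⟩, ?_, rfl⟩
      rw [← hWV]; exact hwW
  set W' : Set ℂ := W ∩ ball (0 : ℂ) (R + 1) with hW'
  have hW'open : IsOpen W' := hWopen.inter isOpen_ball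
  -- Lift to the sphere and contradict connectedness of X
  set u : Set (OnePoint ℂ) := (fun w : ℂ => (w : OnePoint ℂ)) '' W' with hu
  set kk : Set (OnePoint ℂ) := (fun w : ℂ => (w : OnePoint ℂ)) '' K with hkk
  have huopen : IsOpen u := OnePoint.isOpenEmbedding_coe.isOpenMap _ hW'open
  have hkkclosed : IsClosed kk := (hKcomp.image OnePoint.continuous_coe).isClosed
  have hvopen : IsOpen kkᶜ := hkkclosed.isOpen_compl
  have hcover : X ⊆ u ∪ kkᶜ := by
    intro x hx
    by_cases hxk : x ∈ kk
    · obtain ⟨w, hw, rfl⟩ := hxk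
      exact Or.inl ⟨w, (hKeq ▸ hw).1, rfl⟩
    · exact Or.inr hxk
  have hXu : (X ∩ u).Nonempty := ⟨(z : OnePoint ℂ), hz, ⟨z, (hKeq ▸ hzK).1, rfl⟩⟩
  have hXv : (X ∩ kkᶜ).Nonempty := by
    refine ⟨∞, hinf, ?_⟩
    rintro ⟨w, -, hw⟩
    exact OnePoint.coe_ne_infty w hw
  obtain ⟨x, hxX, hxu, hxv⟩ :=
    hXconn.isPreconnected u kkᶜ huopen hvopen hcover hXu hXv
  obtain ⟨w, hwW', rfl⟩ := hxu
  exact hxv ⟨w, hKeq ▸ ⟨hwW', hxX⟩, rfl⟩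
end

section
/- Let F ∈ B_log^norm have finite order, i.e., there exist ρ, M > 0 with log Re F(z) ≤ ρ·Re z + M for all z in the domain 𝒯. Let T be a tract and z ∈ T with Re F(z) ≥ 1, and let γ(t) = F_T^{-1}(F(z) + t) for t ≥ 0 be the horizontal geodesic from z. Then for every t ≥ 0: Re γ(t) ≥ (1/(1+2πρ))·Re z − 2πM/(1+2πρ). -/
open Real

open Complex Metric Set Filter
open scoped Topology

/-- For points in the right half plane, `|w - s| < |w + conj s|`. -/
lemma rhp_key {s w : ℂ} (hs : 0 < s.re) (hw : 0 < w.re) :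
    norm (w - s) < norm (w + (starRingEnd ℂ) s) := by
  have h2 : (norm (w - s)) ^ 2 < (norm (w + (starRingEnd ℂ) s)) ^ 2 := by
    rw [Complex.sq_norm, Complex.sq_norm]
    simp only [Complex.normSq_apply, Complex.sub_re, Complex.sub_im, Complex.add_re,
      Complex.add_im, Complex.conj_re, Complex.conj_im]
    nlinarith
  exact lt_of_pow_lt_pow_left₀ 2 (norm_nonneg _) h2

lemma rhp_ne {s w : ℂ} (hs : 0 < s.re) (hw : 0 < w.re) : w + (starRingEnd ℂ) s ≠ 0 := by
  intro h0
  have : (w + (starRingEnd ℂ) s).re = w.re + s.re := by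
    simp [Complex.add_re, Complex.conj_re]
  rw [h0] at this
  simp at this
  linarith

lemma mobius_inv_re {a u : ℂ} (ha : 0 < a.re) (hu : norm u < 1) :
    0 < ((a + (starRingEnd ℂ) a * u) / (1 - u)).re := by
  have h1u : (1 : ℂ) - u ≠ 0 := by
    intro h0
    have : u = 1 := by linear_combination -h0
    rw [this] at hu; simp at hu
  have hns : 0 < Complex.normSq (1 - u) := Complex.normSq_pos.mpr h1u
  have husq : u.re * u.re + u.im * u.im < 1 := by
    have h := Complex.sq_norm u
    have : norm u ^ 2 < 1 := by nlinarith [norm_nonneg u]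
    rw [Complex.sq_norm, Complex.normSq_apply] at this
    linarith
  have hre : ((a + (starRingEnd ℂ) a * u) / (1 - u)).re
      = a.re * (1 - (u.re * u.re + u.im * u.im)) / Complex.normSq (1 - u) := by
    rw [Complex.div_re]
    simp only [Complex.add_re, Complex.add_im, Complex.mul_re, Complex.mul_im,
      Complex.conj_re, Complex.conj_im, Complex.sub_re, Complex.sub_im,
      Complex.one_re, Complex.one_im, Complex.normSq_apply]
    field_simp
    ring
  rw [hre]
  exact div_pos (mul_pos ha (by linarith)) hns

/-- Schwarz–Pick inequality for holomorphic self-maps of the right half plane. -/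
lemma schwarz_pick_half (h : ℂ → ℂ) (hd : ∀ v : ℂ, 0 < v.re → DifferentiableAt ℂ h v)
    (hm : ∀ v : ℂ, 0 < v.re → 0 < (h v).re) {a b : ℂ} (ha : 0 < a.re) (hb : 0 < b.re) :
    norm (h b - h a) * norm (b + (starRingEnd ℂ) a) ≤
      norm (b - a) * norm (h b + (starRingEnd ℂ) (h a)) := by
  set P : ℂ → ℂ := fun u => (a + (starRingEnd ℂ) a * u) / (1 - u) with hP
  set G : ℂ → ℂ := fun u => (h (P u) - h a) / (h (P u) + (starRingEnd ℂ) (h a)) with hG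
  have hba : b + (starRingEnd ℂ) a ≠ 0 := rhp_ne ha hb
  set u₀ : ℂ := (b - a) / (b + (starRingEnd ℂ) a) with hu₀def
  have hu₀ : norm u₀ < 1 := by
    rw [hu₀def, norm_div, div_lt_one (norm_pos_iff.mpr hba)]
    exact rhp_key ha hb
  have hPre : ∀ u : ℂ, norm u < 1 → 0 < (P u).re := fun u hu => mobius_inv_re ha hu
  have h1u : ∀ u : ℂ, norm u < 1 → (1 : ℂ) - u ≠ 0 := by
    intro u hu h0
    have : u = 1 := by linear_combination -h0
    rw [this] at hu; simp at hu
  -- G is differentiable on the unit ball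
  have hGd : DifferentiableOn ℂ G (ball (0 : ℂ) 1) := by
    intro u hu
    rw [mem_ball_zero_iff] at hu
    have hu' : norm u < 1 := hu
    have hPd : DifferentiableAt ℂ P u :=
      (differentiable_const _ |>.add ((differentiable_const _).mul differentiable_id)).differentiableAt.div
        ((differentiable_const _).sub differentiable_id).differentiableAt (h1u u hu')
    have hhd : DifferentiableAt ℂ h (P u) := hd _ (hPre u hu')
    have hden : h (P u) + (starRingEnd ℂ) (h a) ≠ 0 :=
      rhp_ne (hm a ha) (hm _ (hPre u hu'))
    exact (((hhd.comp u hPd).sub_const _).div ((hhd.comp u hPd).add_const _) hden).differentiableWithinAt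
  -- G maps the unit ball into itself
  have hGm : MapsTo G (ball (0 : ℂ) 1) (ball (0 : ℂ) 1) := by
    intro u hu
    rw [mem_ball_zero_iff] at hu ⊢
    have hw : 0 < (h (P u)).re := hm _ (hPre u hu)
    show norm ((h (P u) - h a) / (h (P u) + (starRingEnd ℂ) (h a))) < 1
    rw [norm_div, div_lt_one (norm_pos_iff.mpr (rhp_ne (hm a ha) hw))]
    exact rhp_key (hm a ha) hw
  -- G 0 = 0
  have hP0 : P 0 = a := by simp [hP]
  have hG0 : G 0 = 0 := by simp [hG, hP0]
  -- Schwarz lemma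
  have hs := Complex.norm_le_norm_of_mapsTo_ball_self hGd (hGm.mono_right ball_subset_closedBall) hG0 hu₀
  -- P u₀ = b
  have haa : a + (starRingEnd ℂ) a ≠ 0 := by
    intro h0
    have : (a + (starRingEnd ℂ) a).re = a.re + a.re := by simp [Complex.add_re, Complex.conj_re]
    rw [h0] at this; simp at this; linarith
  have h1u₀ : (1 : ℂ) - u₀ ≠ 0 := h1u u₀ hu₀
  have hPb : P u₀ = b := by
    rw [hP]
    simp only
    rw [hu₀def]
    rw [div_eq_iff (by rwa [hu₀def] at h1u₀)]
    field_simp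
    ring
  have hsden : h b + (starRingEnd ℂ) (h a) ≠ 0 := rhp_ne (hm a ha) (hm b hb)
  have hGu₀ : G u₀ = (h b - h a) / (h b + (starRingEnd ℂ) (h a)) := by
    rw [hG]; simp only; rw [hPb]
  rw [hGu₀, hu₀def, norm_div, norm_div,
    div_le_div_iff₀ (norm_pos_iff.mpr hsden) (norm_pos_iff.mpr hba)] at hs
  linarith

/-- An injective holomorphic function on an open set has nonvanishing derivative. -/
lemma deriv_ne_zero_of_injOn {f : ℂ → ℂ} {U : Set ℂ} (hU : IsOpen U)
    (hf : DifferentiableOn ℂ f U) (hinj : Set.InjOn f U) {z₀ : ℂ} (hz₀ : z₀ ∈ U) :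
    deriv f z₀ ≠ 0 := by
  intro hder
  have hfa : AnalyticAt ℂ f z₀ := (hf.analyticOnNhd hU) z₀ hz₀
  set f0 : ℂ → ℂ := fun z => f z - f z₀ with hf0
  have hf0a : AnalyticAt ℂ f0 z₀ := hfa.sub analyticAt_const
  -- f0 is not eventually zero near z₀
  have hne : ¬ ∀ᶠ z in 𝓝 z₀, f0 z = 0 := by
    intro hev
    obtain ⟨ε, εpos, hb⟩ := Metric.eventually_nhds_iff_ball.mp
      (hev.and (hU.eventually_mem hz₀))
    set z₁ : ℂ := z₀ + (ε / 2 : ℝ) with hz₁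
    have hz₁mem : z₁ ∈ ball z₀ ε := by
      rw [mem_ball, hz₁]
      simp only [Complex.dist_eq, add_sub_cancel_left]
      rw [Complex.norm_real, Real.norm_eq_abs, abs_of_pos (half_pos εpos)]
      linarith
    obtain ⟨hfz₁, hz₁U⟩ := hb z₁ hz₁mem
    have : f z₁ = f z₀ := by
      have := hfz₁; rw [hf0] at this; simpa [sub_eq_zero] using this
    have : z₁ = z₀ := hinj hz₁U hz₀ this
    rw [hz₁] at this
    have : ((ε / 2 : ℝ) : ℂ) = 0 := by linear_combination this
    simp at this
    linarith
  have horder_ne_top : analyticOrderAt f0 z₀ ≠ ⊤ := by simp only [ne_eq, analyticOrderAt_eq_top]; exact hne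
  obtain ⟨n, hn⟩ := WithTop.ne_top_iff_exists.mp horder_ne_top
  have hn' : analyticOrderAt f0 z₀ = (n : ℕ∞) := hn.symm
  rw [hf0a.analyticOrderAt_eq_natCast] at hn'
  obtain ⟨g, hg, hg0, hfg⟩ := hn'
  simp only [smul_eq_mul] at hfg
  -- n ≠ 0
  have hn0 : n ≠ 0 := by
    intro h0
    have h1 := hfg.self_of_nhds
    rw [h0] at h1
    simp [hf0] at h1
    exact hg0 h1.symm
  -- n ≠ 1
  have hn1 : n ≠ 1 := by
    intro h1
    have hd1 : HasDerivAt (fun z => (z - z₀) ^ n * g z) (g z₀) z₀ := by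
      have h := ((hasDerivAt_id z₀).sub_const z₀).mul hg.differentiableAt.hasDerivAt
      rw [h1]
      simpa [Pi.mul_def] using h
    have hev : f0 =ᶠ[𝓝 z₀] fun z => (z - z₀) ^ n * g z := hfg
    have hderiv0 : deriv f0 z₀ = 0 := by
      have : deriv f0 z₀ = deriv f z₀ := by
        rw [hf0]
        simp [deriv_sub_const]
      rw [this, hder]
    rw [hev.deriv_eq, hd1.deriv] at hderiv0
    exact hg0 hderiv0
  have hn2 : 2 ≤ n := by omega
  -- n-th root of g near z₀
  set α : ℂ := Complex.exp (Complex.log (g z₀) / n) with hα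
  have hαn : α ^ n = g z₀ := by
    rw [hα, ← Complex.exp_nat_mul]
    rw [mul_div_cancel₀ _ (by exact_mod_cast hn0 : (n : ℂ) ≠ 0)]
    exact Complex.exp_log hg0
  have hαne : α ≠ 0 := Complex.exp_ne_zero _
  set r : ℂ → ℂ := fun z => α * Complex.exp (Complex.log (g z * (g z₀)⁻¹) / n) with hr
  set k : ℂ → ℂ := fun z => (z - z₀) * r z with hk
  have hra : AnalyticAt ℂ r z₀ := by
    apply analyticAt_const.mul
    apply analyticAt_cexp.comp
    apply AnalyticAt.div _ analyticAt_const (by exact_mod_cast hn0 : (n : ℂ) ≠ 0)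
    have hq : AnalyticAt ℂ (fun z => g z * (g z₀)⁻¹) z₀ := hg.mul analyticAt_const
    have hq1 : g z₀ * (g z₀)⁻¹ = 1 := mul_inv_cancel₀ hg0
    apply (analyticAt_clog (by rw [hq1]; exact Complex.one_mem_slitPlane)).comp hq
  have hrz₀ : r z₀ = α := by
    rw [hr]
    simp only [mul_inv_cancel₀ hg0, Complex.log_one, zero_div, Complex.exp_zero, mul_one]
  have hka : AnalyticAt ℂ k z₀ := (analyticAt_id.sub analyticAt_const).mul hra
  have hkd : HasDerivAt k α z₀ := by
    have h := ((hasDerivAt_id z₀).sub_const z₀).mul hra.differentiableAt.hasDerivAt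
    simpa [hrz₀, Pi.mul_def] using h
  -- strict derivative
  have hks : HasStrictDerivAt k α z₀ := by
    obtain ⟨p, hp⟩ := hka
    have h1 := hp.hasStrictDerivAt
    have h2 : (p 1 fun _ => 1) = α := by rw [← h1.hasDerivAt.deriv, hkd.deriv]
    rwa [h2] at h1
  have hncast : (n : ℂ) ≠ 0 := by exact_mod_cast hn0
  -- near z₀ : f z = f z₀ + (k z)^n
  have hgne : ∀ᶠ z in 𝓝 z₀, g z ≠ 0 := hg.continuousAt.eventually_ne hg0
  have hkey : ∀ᶠ z in 𝓝 z₀, f z = f z₀ + k z ^ n ∧ z ∈ U := by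
    filter_upwards [hfg, hgne, hU.eventually_mem hz₀] with w hw hgw hwU
    refine ⟨?_, hwU⟩
    have hq : g w * (g z₀)⁻¹ ≠ 0 := mul_ne_zero hgw (inv_ne_zero hg0)
    have hkn : k w ^ n = (w - z₀) ^ n * g w := by
      rw [hk]; simp only
      rw [mul_pow, hr]; simp only
      rw [mul_pow, hαn, ← Complex.exp_nat_mul, mul_div_cancel₀ _ hncast,
        Complex.exp_log hq]
      field_simp
    rw [hkn, ← hw, hf0]; ring
  obtain ⟨V, hV, hVp⟩ := hkey.exists_mem
  have hk0 : k z₀ = 0 := by rw [hk]; simp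
  have himg : k '' V ∈ 𝓝 (0 : ℂ) := by
    have hmap := hks.map_nhds_eq hαne
    rw [hk0] at hmap
    rw [← hmap]
    exact image_mem_map hV
  obtain ⟨ε, εpos, hball⟩ := Metric.mem_nhds_iff.mp himg
  set ω : ℂ := Complex.exp ((2 * Real.pi / n : ℝ) * Complex.I) with hω
  have hωn : ω ^ n = 1 := by
    rw [hω, ← Complex.exp_nat_mul]
    rw [show (n : ℂ) * (((2 * Real.pi / n : ℝ) : ℂ) * Complex.I)
        = 2 * Real.pi * Complex.I by push_cast; field_simp]
    exact Complex.exp_two_pi_mul_I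
  have hωne : ω ≠ 1 := by
    intro h1
    obtain ⟨m, hm⟩ := Complex.exp_eq_one_iff.mp (hω ▸ h1)
    have hI : (Complex.I : ℂ) ≠ 0 := Complex.I_ne_zero
    rw [show (m : ℂ) * (2 * Real.pi * Complex.I) = ((m : ℂ) * (2 * Real.pi)) * Complex.I
      from by ring] at hm
    have hm2 : ((2 * Real.pi / n : ℝ) : ℂ) = (m : ℂ) * (2 * Real.pi) :=
      mul_right_cancel₀ hI hm
    have hm3 : (2 * Real.pi / n : ℝ) = (m : ℝ) * (2 * Real.pi) := by exact_mod_cast hm2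
    have hnpos : (0 : ℝ) < n := by positivity
    have hθpos : 0 < 2 * Real.pi / n := by positivity
    have hθlt : 2 * Real.pi / n < 2 * Real.pi :=
      div_lt_self (by positivity) (by exact_mod_cast hn2.trans_lt' one_lt_two)
    have h0m : (0 : ℝ) < m := by nlinarith [Real.pi_pos]
    have h1m : (m : ℝ) < 1 := by nlinarith [Real.pi_pos]
    have : (0 : ℤ) < m := by exact_mod_cast h0m
    have : (m : ℤ) < 1 := by exact_mod_cast h1m
    omega
  set ζ : ℂ := ((ε / 2 : ℝ) : ℂ) with hζ
  have hζne : ζ ≠ 0 := by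
    rw [hζ]; simp only [ne_eq, Complex.ofReal_eq_zero]; positivity
  have hζmem : ζ ∈ ball (0 : ℂ) ε := by
    rw [mem_ball_zero_iff, hζ, Complex.norm_real, Real.norm_eq_abs,
      abs_of_pos (half_pos εpos)]
    linarith
  have hωζmem : ω * ζ ∈ ball (0 : ℂ) ε := by
    rw [mem_ball_zero_iff, norm_mul, hω, Complex.norm_exp_ofReal_mul_I,
      one_mul, hζ, Complex.norm_real, Real.norm_eq_abs, abs_of_pos (half_pos εpos)]
    linarith
  obtain ⟨z₁, hz₁V, hkz₁⟩ := hball hζmem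
  obtain ⟨z₂, hz₂V, hkz₂⟩ := hball hωζmem
  obtain ⟨hfz₁, hz₁U⟩ := hVp z₁ hz₁V
  obtain ⟨hfz₂, hz₂U⟩ := hVp z₂ hz₂V
  have hfeq : f z₁ = f z₂ := by
    rw [hfz₁, hfz₂, hkz₁, hkz₂, mul_pow, hωn, one_mul]
  have hz12 : z₁ = z₂ := hinj hz₁U hz₂U hfeq
  rw [hz12, hkz₂] at hkz₁
  have : ω = 1 := by
    have h1 : ω * ζ = 1 * ζ := by rw [one_mul, hkz₁]
    exact mul_right_cancel₀ hζne h1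
  exact hωne this

set_option maxHeartbeats 1000000 in
/-- Bounded wiggling for finite-order functions: if `F` maps the tract `T`
(a simply connected domain inside a horizontal strip of height `2π`)
conformally onto the right half plane and `log Re F(w) ≤ ρ Re w + M` on `T`,
then for `z ∈ T` with `Re F(z) ≥ 1`, every point `γ(t) = F_T^{-1}(F(z)+t)`
of the horizontal geodesic from `z` satisfies
`Re γ(t) ≥ Re z/(1+2πρ) − 2πM/(1+2πρ)`. -/
theorem finite_order_bounded_wiggling
    (T : Set ℂ) (hTopen : IsOpen T) (hTsc : SimplyConnectedSpace T)
    (hstrip : ∀ z ∈ T, ∀ w ∈ T, |z.im - w.im| ≤ 2 * π)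
    (F : ℂ → ℂ) (hF : DifferentiableOn ℂ F T)
    (hconf : Set.BijOn F T {w : ℂ | 0 < w.re})
    (ρ M : ℝ) (hρ : 0 < ρ) (hM : 0 < M)
    (horder : ∀ w ∈ T, Real.log (F w).re ≤ ρ * w.re + M)
    (z : ℂ) (hz : z ∈ T) (hz1 : 1 ≤ (F z).re)
    (γ : ℝ → ℂ) (hγ : ∀ t : ℝ, 0 ≤ t → γ t ∈ T ∧ F (γ t) = F z + t) :
    ∀ t : ℝ, 0 ≤ t →
      (1 / (1 + 2 * π * ρ)) * z.re - 2 * π * M / (1 + 2 * π * ρ) ≤ (γ t).re := by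
  intro t ht
  obtain ⟨hγT, hγF⟩ := hγ t ht
  set x : ℝ := (F z).re with hx
  have hxpos : (0 : ℝ) < x := lt_of_lt_of_le one_pos hz1
  -- the strip constant
  have hSne : (Complex.im '' T).Nonempty := ⟨z.im, z, hz, rfl⟩
  have hSbdd : BddBelow (Complex.im '' T) := by
    refine ⟨z.im - 2 * π, ?_⟩
    rintro y ⟨w, hw, rfl⟩
    have := abs_le.mp (hstrip z hz w hw)
    linarith [this.2]
  set A : ℝ := sInf (Complex.im '' T) with hA
  have hstrict : ∀ w ∈ T, A < w.im ∧ w.im < A + 2 * π := by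
    intro w hw
    obtain ⟨δ, δpos, hδ⟩ := Metric.isOpen_iff.mp hTopen w hw
    have hmemb : ∀ s : ℝ, |s| < δ → w + (s : ℂ) * Complex.I ∈ T := by
      intro s hs
      apply hδ
      rw [Metric.mem_ball, Complex.dist_eq]
      simp only [add_sub_cancel_left]
      rwa [norm_mul, Complex.norm_I, Complex.norm_real, Real.norm_eq_abs, mul_one]
    have hmemim : ∀ s : ℝ, (w + (s : ℂ) * Complex.I).im = w.im + s := by
      intro s; simp
    constructor
    · have h1 : w.im - δ / 2 ∈ Complex.im '' T := by
        refine ⟨w + ((-(δ/2) : ℝ) : ℂ) * Complex.I, hmemb _ ?_, by rw [hmemim]; ring⟩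
        rw [abs_neg, abs_of_pos (half_pos δpos)]; linarith
      have := csInf_le hSbdd h1
      rw [← hA] at this
      linarith
    · obtain ⟨y, hyS, hy⟩ := (csInf_lt_iff hSbdd hSne).mp
        (show sInf (Complex.im '' T) < A + δ / 4 by rw [← hA]; linarith)
      obtain ⟨u, huT, huy⟩ := hyS
      have h2 : w + ((δ/2 : ℝ) : ℂ) * Complex.I ∈ T := by
        apply hmemb
        rw [abs_of_pos (half_pos δpos)]; linarith
      have h3 := abs_le.mp (hstrip _ h2 u huT)
      rw [hmemim] at h3
      have hyA : A ≤ y := csInf_le hSbdd ⟨u, huT, huy⟩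
      rw [huy] at h3
      linarith [h3.1, h3.2, hy]
  set c : ℝ := A + π with hc
  have hcs : ∀ w ∈ T, |w.im - c| < π := by
    intro w hw
    obtain ⟨h1, h2⟩ := hstrict w hw
    rw [abs_lt, hc]
    constructor <;> linarith
  -- the inverse map
  set φ : ℂ → ℂ := Function.invFunOn F T with hφ
  have hφT : ∀ v : ℂ, 0 < v.re → φ v ∈ T ∧ F (φ v) = v := by
    intro v hv
    have hvi : v ∈ F '' T := hconf.surjOn (show v ∈ {w : ℂ | 0 < w.re} from hv)
    obtain ⟨a, haT, hav⟩ := hvi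
    exact ⟨Function.invFunOn_mem ⟨a, haT, hav⟩, Function.invFunOn_eq ⟨a, haT, hav⟩⟩
  have hφF : ∀ w ∈ T, φ (F w) = w := fun w hw => hconf.injOn.leftInvOn_invFunOn hw
  have hφd : ∀ v : ℂ, 0 < v.re → DifferentiableAt ℂ φ v := by
    intro v hv
    obtain ⟨hmem, hFv⟩ := hφT v hv
    have hder : deriv F (φ v) ≠ 0 := deriv_ne_zero_of_injOn hTopen hF hconf.injOn hmem
    obtain ⟨p, hp⟩ := (hF.analyticOnNhd hTopen) _ hmem
    have hstr := hp.hasStrictDerivAt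
    have heq : (p 1 fun _ => 1) = deriv F (φ v) := hstr.hasDerivAt.deriv.symm
    rw [heq] at hstr
    have hloc : ∀ᶠ w in 𝓝 (φ v), φ (F w) = w := by
      filter_upwards [hTopen.mem_nhds hmem] with w hw using hφF w hw
    have h2 := hstr.to_local_left_inverse hder hloc
    rw [hFv] at h2
    exact HasStrictFDerivAt.differentiableAt h2
  -- the exponential transplant
  set h : ℂ → ℂ := fun v => Complex.exp ((φ v - (c : ℂ) * Complex.I) / 2) with hh
  have harg : ∀ v : ℂ, ((φ v - (c : ℂ) * Complex.I) / 2).re = (φ v).re / 2 ∧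
      ((φ v - (c : ℂ) * Complex.I) / 2).im = ((φ v).im - c) / 2 := by
    intro v
    constructor
    · rw [show (φ v - (c : ℂ) * Complex.I) / 2 = (φ v - (c : ℂ) * Complex.I) * (1/2 : ℝ) by
        push_cast; ring]
      simp [Complex.mul_re]
      ring
    · rw [show (φ v - (c : ℂ) * Complex.I) / 2 = (φ v - (c : ℂ) * Complex.I) * (1/2 : ℝ) by
        push_cast; ring]
      simp [Complex.mul_im]
      ring
  have hhd : ∀ v : ℂ, 0 < v.re → DifferentiableAt ℂ h v := by
    intro v hv
    exact (((hφd v hv).sub_const _).div_const 2).cexp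
  have hhm : ∀ v : ℂ, 0 < v.re → 0 < (h v).re := by
    intro v hv
    rw [hh]
    simp only
    rw [Complex.exp_re, (harg v).2]
    apply mul_pos (Real.exp_pos _)
    apply Real.cos_pos_of_mem_Ioo
    have := abs_lt.mp (hcs _ (hφT v hv).1)
    constructor
    · linarith [this.1]
    · linarith [this.2]
  have habs : ∀ v : ℂ, norm (h v) = Real.exp ((φ v).re / 2) := by
    intro v
    rw [hh]
    simp only
    rw [Complex.norm_exp, (harg v).1]
  -- Schwarz--Pick
  have ha : 0 < (F z).re := hxpos
  have hb : 0 < (F z + (t : ℂ)).re := by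
    rw [Complex.add_re, Complex.ofReal_re]; linarith
  have hsp := schwarz_pick_half h hhd hhm ha hb
  have hφz : φ (F z) = z := hφF z hz
  have hφγ : φ (F z + (t : ℂ)) = γ t := by rw [← hγF]; exact hφF _ hγT
  have hdiff : (F z + (t : ℂ)) - F z = (t : ℂ) := by ring
  have hsum : (F z + (t : ℂ)) + (starRingEnd ℂ) (F z) = ((2 * x + t : ℝ) : ℂ) := by
    have h1 : (F z + (t : ℂ)) + (starRingEnd ℂ) (F z)
        = (F z + (starRingEnd ℂ) (F z)) + (t : ℂ) := by ring
    rw [h1, Complex.add_conj, ← hx]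
    push_cast; ring
  rw [hdiff, hsum, Complex.norm_real, Complex.norm_real, Real.norm_eq_abs, Real.norm_eq_abs,
    _root_.abs_of_nonneg ht, _root_.abs_of_pos (by linarith : (0:ℝ) < 2 * x + t)] at hsp
  set Ae : ℝ := Real.exp (z.re / 2) with hAe
  set Be : ℝ := Real.exp ((γ t).re / 2) with hBe
  have habsa : norm (h (F z)) = Ae := by rw [habs, hφz, hAe]
  have habsb : norm (h (F z + (t : ℂ))) = Be := by rw [habs, hφγ, hBe]
  have htri : norm (h (F z + (t : ℂ)) + (starRingEnd ℂ) (h (F z))) ≤ Be + Ae := by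
    refine le_trans (norm_add_le _ _) ?_
    rw [Complex.norm_conj, habsa, habsb]
  have hlow : Ae - Be ≤ norm (h (F z + (t : ℂ)) - h (F z)) := by
    have := norm_sub_norm_le (h (F z)) (h (F z + (t : ℂ)))
    rw [habsa, habsb] at this
    calc Ae - Be ≤ norm (h (F z) - h (F z + (t : ℂ))) := this
    _ = norm (h (F z + (t : ℂ)) - h (F z)) := by rw [norm_sub_rev]
  have hApos : 0 < Ae := Real.exp_pos _
  have hBpos : 0 < Be := Real.exp_pos _
  have hchain : (Ae - Be) * (2 * x + t) ≤ t * (Be + Ae) := by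
    calc (Ae - Be) * (2 * x + t)
        ≤ norm (h (F z + (t : ℂ)) - h (F z)) * (2 * x + t) := by
          exact mul_le_mul_of_nonneg_right hlow (by linarith : (0:ℝ) ≤ 2 * x + t)
      _ ≤ t * norm (h (F z + (t : ℂ)) + (starRingEnd ℂ) (h (F z))) := hsp
      _ ≤ t * (Be + Ae) := mul_le_mul_of_nonneg_left htri ht
  -- deduce Ae ≤ (1 + t) * Be
  have hAB : Ae ≤ (1 + t) * Be := by
    nlinarith [hchain, mul_nonneg (mul_nonneg ht hBpos.le) (by linarith : (0:ℝ) ≤ x - 1),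
      hxpos, mul_pos hxpos hBpos]
  have hre2 : z.re / 2 ≤ (γ t).re / 2 + Real.log (1 + t) := by
    have h1 : Ae ≤ Real.exp ((γ t).re / 2 + Real.log (1 + t)) := by
      rw [Real.exp_add, Real.exp_log (by linarith : (0:ℝ) < 1 + t)]
      calc Ae ≤ (1 + t) * Be := hAB
      _ = Be * (1 + t) := by ring
    rw [hAe] at h1
    exact Real.exp_le_exp.mp h1
  -- the finite-order estimate
  have hγre : (F (γ t)).re = x + t := by
    rw [hγF, Complex.add_re, Complex.ofReal_re, ← hx]
  have hord := horder (γ t) hγT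
  rw [hγre] at hord
  have hlog1 : Real.log (1 + t) ≤ ρ * (γ t).re + M := by
    refine le_trans ?_ hord
    apply Real.log_le_log (by linarith)
    linarith
  have hlognn : 0 ≤ Real.log (1 + t) := Real.log_nonneg (by linarith)
  have hπ3 : (3 : ℝ) < π := Real.pi_gt_three
  have hden : (0 : ℝ) < 1 + 2 * π * ρ := by nlinarith
  rw [show (1 / (1 + 2 * π * ρ)) * z.re - 2 * π * M / (1 + 2 * π * ρ)
      = (z.re - 2 * π * M) / (1 + 2 * π * ρ) by ring]
  rw [div_le_iff₀ hden]
  have hfin : z.re ≤ (γ t).re + 2 * Real.log (1 + t) := by linarith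
  nlinarith [mul_nonneg (by nlinarith : (0:ℝ) ≤ π - 1)
    (le_trans hlognn hlog1), hlog1, hlognn]
end
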